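/- arXiv:1112.5772 — 2 statements merged into one kernel-verified Lean document; each statement's English description precedes it below -/
import Mathlib

section
/- Let λ be a regular infinite cardinal and λ < μ < 𝔰_λ. Then (μ,λ) → (μ,λ)^{1,1}_2 holds if and only if cf(μ) ≠ λ. -/
open Cardinal Set

noncomputable section

/-- The canonical type of cardinality `c`: the order type of `c.ord`. -/
abbrev OT (c : Cardinal) : Type _ := c.ord.ToType

/-- `S` splits `B` (as subsets of a set of size `lam`). -/
def Splits (lam : Cardinal) (S B : Set (OT lam)) : Prop :=
  #(↥(S ∩ B)) = lam ∧ #(↥(B \ S)) = lam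

/-- A splitting family on `lam`. -/
def IsSplittingFamily (lam : Cardinal) (F : Set (Set (OT lam))) : Prop :=
  ∀ B : Set (OT lam), #B = lam → ∃ S ∈ F, Splits lam S B

/-- The splitting number `𝔰_lam`. -/
def splittingNumber (lam : Cardinal) : Cardinal :=
  sInf { κ | ∃ F : Set (Set (OT lam)), #F = κ ∧ IsSplittingFamily lam F }

/-- An unreaped family on `lam`. -/
def IsUnreaped (lam : Cardinal) (F : Set (Set (OT lam))) : Prop :=
  (∀ A ∈ F, #A = lam) ∧
  ¬ ∃ S : Set (OT lam), #S = lam ∧ ∀ A ∈ F, Splits lam S A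

/-- The reaping number `𝔯_lam`. -/
def reapingNumber (lam : Cardinal) : Cardinal :=
  sInf { κ | ∃ F : Set (Set (OT lam)), #F = κ ∧ IsUnreaped lam F }

/-- The strong polarized relation `(μ, lam) → (μ, lam)^{1,1}_2`. -/
def StrongPolarized (μ lam : Cardinal) : Prop :=
  ∀ c : OT μ → OT lam → Fin 2,
    ∃ (A : Set (OT μ)) (B : Set (OT lam)) (i : Fin 2),
      #A = μ ∧ #B = lam ∧ ∀ α ∈ A, ∀ β ∈ B, c α β = i

end

/-!
If `cf μ = λ`, fix an increasing cofinal `f : λ → μ` and colour `(α, β)` by whether `α < f β`.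
A homogeneous `A × B` of colour `0` would put `A` below `f β`, and one of colour `1` would put
the cofinal set `f[B]` below a single `α ∈ A`.

If `cf μ ≠ λ`, the `μ < 𝔰_λ` rows `{β | c α β = 0}` are not a splitting family, so some
`B ∈ [λ]^λ` is split by none of them: each row `c α` is constant on `B` outside a set of size
`< λ`, hence (`λ` regular) outside an initial segment below some `g α < λ`. Fix a colour taken by
`μ` rows. The rows with `g α ≤ j` increase with `j` and exhaust them, so as `cf μ ≠ λ` some `j`
already gives `μ` rows; these are homogeneous on `B` above `j`.
-/

universe u

section CardinalLemmas

variable {α X : Type u}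

theorem exists_forall_lt_of_mk_lt_cof [LinearOrder α] {s : Set α} (h : #s < Order.cof α) :
    ∃ x, ∀ y ∈ s, y < x :=
  not_isCofinal_iff.1 fun hs => (Order.cof_le hs).not_gt h

theorem Cardinal.IsRegular.cof_toType_ord {lam : Cardinal} (hlam : lam.IsRegular) :
    Order.cof lam.ord.ToType = lam := by
  rw [Ordinal.cof_toType, hlam.cof_ord]

theorem mk_Iic_toType_ord_lt {c : Cardinal} (hc : ℵ₀ ≤ c) (j : c.ord.ToType) : #(Iic j) < c := by
  simpa using mk_Iic_lt j (by simp) (by simpa using hc)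

theorem exists_mem_gt_of_mk_eq {c : Cardinal} (hc : ℵ₀ ≤ c) {s : Set c.ord.ToType} (hs : #s = c)
    (j : c.ord.ToType) : ∃ x ∈ s, j < x := by
  by_contra! h
  exact (mk_le_mk_of_subset h).trans_lt (mk_Iic_toType_ord_lt hc j) |>.ne hs

theorem exists_le_mk_Iio_toType_ord {μ ν : Cardinal} (hν : ν < μ) :
    ∃ x : μ.ord.ToType, ν ≤ #(Iio x) := by
  have : ν.ord < Ordinal.type (α := μ.ord.ToType) (· < ·) := by simpa using hν
  refine ⟨Ordinal.enum (α := μ.ord.ToType) (· < ·) ⟨ν.ord, this⟩, le_of_eq ?_⟩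
  change ν = #{y // y < _}
  rw [← Ordinal.card_typein, Ordinal.typein_enum, card_ord]

theorem mk_sdiff_eq_of_mk_lt {κ : Cardinal} (hκ : ℵ₀ ≤ κ) {s t : Set X} (hs : #s = κ)
    (ht : #t < κ) : #(s \ t : Set X) = κ := by
  refine le_antisymm (hs ▸ mk_le_mk_of_subset sdiff_subset) (not_lt.1 fun h => ?_)
  exact (le_mk_sdiff_add_mk s t).trans_lt (add_lt_of_lt hκ h ht) |>.ne hs

theorem exists_mk_preimage_eq_of_finite {Y : Type} [Finite Y] (hX : ℵ₀ ≤ #X) (p : X → Y) :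
    ∃ y, #(p ⁻¹' {y}) = #X := by
  have hY : #(ULift.{u} Y) < (#X).ord.cof := (lt_aleph0_of_finite _).trans_le <|
    Ordinal.aleph0_le_cof_iff.2 (Ordinal.one_lt_cof_iff.2 (isSuccLimit_ord hX))
  obtain ⟨⟨y⟩, hy⟩ := infinite_pigeonhole (ULift.up ∘ p) hX hY
  refine ⟨y, Eq.trans ?_ hy⟩
  congr 2
  ext
  simp [ULift.ext_iff]

end CardinalLemmas

section Fibers

variable {lam : Cardinal.{u}}

theorem exists_eq_iSup_of_monotone (hlam : lam.IsRegular) {F : lam.ord.ToType → Cardinal.{u}}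
    (hF : Monotone F) (hcof : (⨆ j, F j).ord.cof ≠ lam) : ∃ j, F j = ⨆ j, F j := by
  have := nonempty_ord_toType hlam.ne_zero
  set μ := ⨆ j, F j
  by_contra! hne
  have hlt : ∀ j, F j < μ := fun j => (le_ciSup bddAbove_of_small j).lt_of_ne (hne j)
  rcases hcof.lt_or_gt with hsmall | hbig
  · obtain ⟨s, hs, hs_card⟩ := Order.exists_cof_eq μ.ord.ToType
    rw [Ordinal.cof_toType] at hs_card
    have hexceed : ∀ x : s, ∃ j, #(Iio x.1) < F j := fun x =>
      exists_lt_of_lt_ciSup (by simpa using mk_Iio_lt x.1 (by simp))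
    choose jx hjx using hexceed
    obtain ⟨j₀, hj₀⟩ := exists_forall_lt_of_mk_lt_cof (s := range jx)
      (by rw [hlam.cof_toType_ord]; exact mk_range_le.trans_lt (hs_card ▸ hsmall))
    -- `F j₀ < μ` is attained as `#(Iio y)`, but some `x ∈ s` above `y` has `#(Iio x) < F j₀`.
    obtain ⟨y, hy⟩ := exists_le_mk_Iio_toType_ord (hlt j₀)
    obtain ⟨x, hx, hyx⟩ := hs y
    have := (hjx ⟨x, hx⟩).trans_le (hF (hj₀ _ (mem_range_self _)).le)
    exact (hy.trans (mk_le_mk_of_subset (Iio_subset_Iio hyx))).not_gt this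
  · exact (iSup_lt_of_lt_cof_ord (by simpa using hbig) hlt).ne rfl

theorem exists_mk_sep_le_eq {X : Type u} {μ : Cardinal.{u}} (hlam : lam.IsRegular) (h1 : lam < μ)
    (hcof : μ.ord.cof ≠ lam) {A : Set X} (hA : #A = μ) (g : X → lam.ord.ToType) :
    ∃ j, #{x ∈ A | g x ≤ j} = μ := by
  have hμ : ℵ₀ ≤ μ := hlam.aleph0_le.trans h1.le
  have := nonempty_ord_toType hlam.ne_zero
  set F : lam.ord.ToType → Cardinal := fun j => #{x ∈ A | g x ≤ j}
  have hF : Monotone F := fun j k hjk =>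
    mk_le_mk_of_subset fun x hx => ⟨hx.1, hx.2.trans hjk⟩
  have hcover : A ⊆ ⋃ j, {x ∈ A | g x ≤ j} := fun x hx => mem_iUnion.2 ⟨g x, hx, le_rfl⟩
  have hsup : ⨆ j, F j = μ := by
    refine le_antisymm (ciSup_le fun j => hA ▸ mk_le_mk_of_subset fun x hx => hx.1) ?_
    by_contra! hlt
    have : μ ≤ lam * ⨆ j, F j := by
      simpa [hA] using (mk_le_mk_of_subset hcover).trans (mk_iUnion_le _)
    exact (this.trans_lt (mul_lt_of_lt hμ h1 hlt)).false
  rw [← hsup] at hcof ⊢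
  exact exists_eq_iSup_of_monotone hlam hF hcof

end Fibers

theorem exists_strictMono_isCofinal_range {α : Type u} [LinearOrder α] [WellFoundedLT α] :
    ∃ f : (Order.cof α).ord.ToType → α, StrictMono f ∧ IsCofinal (range f) := by
  obtain ⟨s, hs, htype⟩ := Ordinal.exists_ord_cof_eq α
  rw [← Ordinal.type_toType (Order.cof α).ord] at htype
  obtain ⟨e⟩ := Ordinal.type_eq.1 htype.symm
  refine ⟨Subtype.val ∘ OrderIso.ofRelIsoLT e,
    (Subtype.strictMono_coe _).comp (OrderIso.ofRelIsoLT e).strictMono, ?_⟩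
  rwa [range_comp, OrderIso.range_eq, image_univ, Subtype.range_coe]

theorem not_strongPolarized_of_cof_eq {lam μ : Cardinal.{u}} (hlam : ℵ₀ ≤ lam)
    (hcof : μ.ord.cof = lam) : ¬ StrongPolarized μ lam := by
  have hμ : ℵ₀ ≤ μ := hlam.trans (hcof ▸ Ordinal.cof_ord_le μ)
  obtain ⟨f, hf, hrange⟩ :
      ∃ f : lam.ord.ToType → μ.ord.ToType, StrictMono f ∧ IsCofinal (range f) := by
    have h := exists_strictMono_isCofinal_range (α := μ.ord.ToType)
    rwa [Ordinal.cof_toType, hcof] at h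
  intro hSP
  obtain ⟨A, B, i, hA, hB, hmono⟩ := hSP fun α β => if α < f β then 0 else 1
  obtain ⟨β₀, hβ₀⟩ : B.Nonempty := by
    rw [← nonempty_coe_sort, ← mk_ne_zero_iff, hB]
    exact (aleph0_pos.trans_le hlam).ne'
  obtain ⟨α₀, hα₀, hβα⟩ := exists_mem_gt_of_mk_eq hμ hA (f β₀)
  have hi : i = 1 := by simpa [hβα.not_gt] using (hmono α₀ hα₀ β₀ hβ₀).symm
  obtain ⟨y, -, hαy⟩ := exists_mem_gt_of_mk_eq hμ (s := univ) (by simp) α₀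
  obtain ⟨_, ⟨γ, rfl⟩, hyγ⟩ := hrange y
  obtain ⟨β, hβ, hγβ⟩ := exists_mem_gt_of_mk_eq hlam hB γ
  have : α₀ < f β := hαy.trans_le (hyγ.trans (hf hγβ).le)
  have h := hmono α₀ hα₀ β hβ
  rw [if_pos this, hi] at h
  exact absurd h (by decide)

section Splitting

variable {lam : Cardinal.{u}}

theorem exists_not_splits_of_mk_lt_splittingNumber {ι : Type u} (S : ι → Set lam.ord.ToType)
    (h : #ι < splittingNumber lam) :
    ∃ B : Set lam.ord.ToType, #B = lam ∧ ∀ i, ¬ Splits lam (S i) B := by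
  by_contra! hsplit
  have hfam : IsSplittingFamily lam (range S) := fun B hB => by
    obtain ⟨i, hi⟩ := hsplit B hB
    exact ⟨S i, mem_range_self i, hi⟩
  have hle : splittingNumber lam ≤ #(range S) := csInf_le' ⟨range S, rfl, hfam⟩
  exact (hle.trans mk_range_le).not_gt h

theorem exists_mk_sep_ne_lt_of_not_splits (c : lam.ord.ToType → Fin 2) {B : Set lam.ord.ToType}
    (h : ¬ Splits lam {β | c β = 0} B) : ∃ i, #{β ∈ B | c β ≠ i} < lam := by
  have hle : ∀ s : Set lam.ord.ToType, #s ≤ lam := fun s => by simpa using mk_set_le s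
  by_cases h0 : #({β | c β = 0} ∩ B : Set lam.ord.ToType) = lam
  · exact ⟨0, (hle _).lt_of_ne fun h' => h ⟨h0, h'⟩⟩
  · refine ⟨1, (hle _).lt_of_ne fun h' => h0 (Eq.trans ?_ h')⟩
    congr 2
    ext β
    simp only [mem_inter_iff, mem_ofPred_eq]
    have : c β ≠ 1 ↔ c β = 0 := by omega
    rw [this, and_comm]

theorem strongPolarized_of_cof_ne {μ : Cardinal.{u}} (hlam : lam.IsRegular) (h1 : lam < μ)
    (h2 : μ < splittingNumber lam) (hcof : μ.ord.cof ≠ lam) : StrongPolarized μ lam := by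
  have hμ : ℵ₀ ≤ μ := hlam.aleph0_le.trans h1.le
  intro c
  obtain ⟨B, hB, hunsplit⟩ :=
    exists_not_splits_of_mk_lt_splittingNumber (fun α => {β | c α β = 0}) (by simpa using h2)
  choose col hcol using fun α => exists_mk_sep_ne_lt_of_not_splits (c α) (hunsplit α)
  choose g hg using fun α =>
    exists_forall_lt_of_mk_lt_cof (by rw [hlam.cof_toType_ord]; exact hcol α)
  obtain ⟨i, hi⟩ := exists_mk_preimage_eq_of_finite (by simpa using hμ) col
  obtain ⟨j, hj⟩ := exists_mk_sep_le_eq hlam h1 hcof (hi.trans (by simp)) g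
  refine ⟨_, B \ Iic j, i, hj, mk_sdiff_eq_of_mk_lt hlam.aleph0_le hB
    (mk_Iic_toType_ord_lt hlam.aleph0_le j), ?_⟩
  rintro α ⟨rfl, hαj⟩ β ⟨hβ, hjβ⟩
  by_contra hne
  exact hjβ ((hg α β ⟨hβ, hne⟩).le.trans hαj)

end Splitting

/-- for regular `lam` and `lam < μ < 𝔰_lam`, the strong polarized
relation `(μ,lam) → (μ,lam)^{1,1}_2` holds iff `cf μ ≠ lam`. -/
theorem stmt2 (lam μ : Cardinal) (hlam : lam.IsRegular)
    (h1 : lam < μ) (h2 : μ < splittingNumber lam) :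
    StrongPolarized μ lam ↔ μ.ord.cof ≠ lam :=
  ⟨fun hSP hcof => not_strongPolarized_of_cof_eq hlam.aleph0_le hcof hSP,
    strongPolarized_of_cof_ne hlam h1 h2⟩
end

section
/- If 𝔯 = ℵ₁ and 𝔰 = 2^{ℵ₀} = ℵ₂, then the strong polarized relation (θ, ℵ₀) → (θ, ℵ₀)^{1,1}_2 holds simultaneously for every cardinal θ with ℵ₁ ≤ θ ≤ 2^{ℵ₀}. -/
/-!
Under these hypotheses `2 ^ ℵ₀ = ℵ₂`, so `θ` is `ℵ₁` or `ℵ₂`. Both cases rest on one pigeonhole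
step: if the color classes of `θ` many rows `c α` fail to split a fixed infinite `B`, each row
is constant on `B` off a finite set; there are only countably many (color, finite set) pairs and
`cf θ > ℵ₀`, so `θ` many rows share them, and these rows together with `B` minus the finite set
form a homogeneous rectangle.

For `θ = ℵ₁ < 𝔰` the color classes of the `ℵ₁` rows are not a splitting family, so some infinite
`B` is split by none of them. For `θ = ℵ₂ > 𝔯` fix an unreaped family of size `𝔯 = ℵ₁`: no row
splits all its members, so the regularity of `ℵ₂` yields a member `B` left unsplit by `ℵ₂`
many rows.
-/

open Cardinal Set

universe u v w

namespace Cardinal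

theorem mk_set_eq_aleph0_iff {α : Type u} [Countable α] {s : Set α} :
    #s = ℵ₀ ↔ s.Infinite := by
  rw [← infinite_coe_iff, ← aleph0_le_mk_iff, le_antisymm_iff, and_iff_right mk_le_aleph0]

theorem mk_iUnion_lt_of_lift_lt_cof {α : Type u} {ι : Type v} {μ : Cardinal.{u}} (hμ : ℵ₀ ≤ μ)
    (hι : lift.{u} #ι < lift.{v} μ.ord.cof) (f : ι → Set α) (hf : ∀ i, #(f i) < μ) :
    #(⋃ i, f i) < μ := by
  rw [← lift_lt.{u, v}]
  refine (mk_iUnion_le_lift f).trans_lt (mul_lt_of_lt (aleph0_le_lift.2 hμ) ?_ ?_)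
  · exact hι.trans_le (by simpa using Ordinal.cof_ord_le (lift.{v} μ))
  · refine lift_iSup_lt_of_lt_cof_ord ?_ fun i => lift_lt.2 (hf i)
    rwa [lift_umax, lift_id'.{v, u}, ← lift_ord, ← Ordinal.lift_cof]

theorem exists_le_mk_of_subset_iUnion {α : Type u} {ι : Type v} {μ : Cardinal.{u}} (hμ : ℵ₀ ≤ μ)
    (hι : lift.{u} #ι < lift.{v} μ.ord.cof) {D : Set α} (hD : μ ≤ #D) (f : ι → Set α)
    (hsub : D ⊆ ⋃ i, f i) : ∃ i, μ ≤ #(f i) := by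
  by_contra! h
  exact (hD.trans (mk_le_mk_of_subset hsub)).not_gt (mk_iUnion_lt_of_lift_lt_cof hμ hι f h)

end Cardinal

instance : Countable (OT aleph0.{u}) := by
  rw [← mk_le_aleph0_iff, mk_ord_toType]

instance : Infinite (OT aleph0.{u}) := by
  rw [infinite_iff, mk_ord_toType]

theorem mk_image_equiv_eq_aleph0_iff (e : OT aleph0.{u} ≃ OT aleph0.{v})
    {A : Set (OT aleph0.{u})} : #(e '' A) = ℵ₀ ↔ #A = ℵ₀ := by
  simp only [mk_set_eq_aleph0_iff, infinite_image_iff e.injective.injOn]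

theorem splits_aleph0_iff {S B : Set (OT aleph0.{u})} :
    Splits ℵ₀ S B ↔ (S ∩ B).Infinite ∧ (B \ S).Infinite := by
  simp only [Splits, mk_set_eq_aleph0_iff]

theorem splits_image_equiv_iff (e : OT aleph0.{u} ≃ OT aleph0.{v}) {S B : Set (OT aleph0.{u})} :
    Splits ℵ₀ (e '' S) (e '' B) ↔ Splits ℵ₀ S B := by
  simp only [splits_aleph0_iff, ← image_inter e.injective, ← image_sdiff e.injective,
    infinite_image_iff e.injective.injOn]

theorem IsSplittingFamily.image_equiv {F : Set (Set (OT aleph0.{u}))}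
    (hF : IsSplittingFamily ℵ₀ F) (e : OT aleph0.{u} ≃ OT aleph0.{v}) :
    IsSplittingFamily ℵ₀ ((e '' ·) '' F) := by
  intro B hB
  obtain ⟨S, hSF, hS⟩ := hF (e.symm '' B) ((mk_image_equiv_eq_aleph0_iff e.symm).2 hB)
  refine ⟨e '' S, mem_image_of_mem _ hSF, ?_⟩
  rwa [← e.image_symm_image B, splits_image_equiv_iff]

theorem IsUnreaped.image_equiv {F : Set (Set (OT aleph0.{u}))} (hF : IsUnreaped ℵ₀ F)
    (e : OT aleph0.{u} ≃ OT aleph0.{v}) : IsUnreaped ℵ₀ ((e '' ·) '' F) := by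
  refine ⟨?_, fun ⟨S, hS, hSF⟩ => hF.2 ⟨e.symm '' S, ?_, fun A hA => ?_⟩⟩
  · rintro _ ⟨A, hA, rfl⟩
    exact (mk_image_equiv_eq_aleph0_iff e).2 (hF.1 A hA)
  · exact (mk_image_equiv_eq_aleph0_iff e.symm).2 hS
  · rw [← splits_image_equiv_iff e, e.image_symm_image]
    exact hSF _ (mem_image_of_mem _ hA)

theorem IsUnreaped.exists_not_splits {F : Set (Set (OT aleph0.{u}))} (hF : IsUnreaped ℵ₀ F)
    (S : Set (OT aleph0.{u})) : ∃ A ∈ F, ¬ Splits ℵ₀ S A := by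
  by_cases hS : S.Infinite
  · by_contra! h
    exact hF.2 ⟨S, mk_set_eq_aleph0_iff.2 hS, h⟩
  · obtain ⟨A, hA⟩ : F.Nonempty := by
      by_contra! hF₀
      exact hF.2 ⟨univ, by simp, by simp [hF₀]⟩
    exact ⟨A, hA, fun h => hS ((splits_aleph0_iff.1 h).1.mono inter_subset_left)⟩

theorem isUnreaped_setOf_mk_eq {lam : Cardinal.{u}} (hlam : lam ≠ 0) :
    IsUnreaped lam {A | #A = lam} :=
  ⟨fun _ hA => hA, fun ⟨S, hS, hSS⟩ => hlam (by simpa using (hSS S hS).2.symm)⟩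

theorem exists_isUnreaped_mk_eq_reapingNumber {lam : Cardinal.{u}} (hlam : lam ≠ 0) :
    ∃ F : Set (Set (OT lam)), #F = reapingNumber lam ∧ IsUnreaped lam F :=
  csInf_mem (s := {κ | ∃ F : Set (Set (OT lam)), #F = κ ∧ IsUnreaped lam F})
    ⟨_, _, rfl, isUnreaped_setOf_mk_eq hlam⟩

theorem lift_splittingNumber_aleph0_le {F : Set (Set (OT aleph0.{u}))}
    (hF : IsSplittingFamily ℵ₀ F) : lift.{u} (splittingNumber.{w} ℵ₀) ≤ lift.{w} #F := by
  obtain ⟨e⟩ : Nonempty (OT aleph0.{u} ≃ OT aleph0.{w}) := nonempty_equiv_of_countable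
  rw [← mk_image_eq_lift _ F (image_injective.2 e.injective), lift_le]
  exact csInf_le' ⟨_, rfl, hF.image_equiv e⟩

theorem exists_isUnreaped_lift_mk_eq_lift_reapingNumber :
    ∃ F : Set (Set (OT aleph0.{u})), lift.{w} #F = lift.{u} (reapingNumber.{w} ℵ₀) ∧
      IsUnreaped ℵ₀ F := by
  obtain ⟨e⟩ : Nonempty (OT aleph0.{w} ≃ OT aleph0.{u}) := nonempty_equiv_of_countable
  obtain ⟨F, hFr, hF⟩ := exists_isUnreaped_mk_eq_reapingNumber aleph0_ne_zero.{w}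
  exact ⟨_, by rw [mk_image_eq_lift _ F (image_injective.2 e.injective), hFr], hF.image_equiv e⟩

theorem exists_eqOn_diff_finset_of_not_splits {g : OT aleph0.{u} → Fin 2}
    {B : Set (OT aleph0.{u})} (h : ¬ Splits ℵ₀ {m | g m = 0} B) :
    ∃ (i : Fin 2) (E : Finset (OT aleph0.{u})), ∀ m ∈ B \ E, g m = i := by
  rw [splits_aleph0_iff, not_and_or, not_infinite, not_infinite] at h
  rcases h with h | h
  · refine ⟨1, h.toFinset, fun m ⟨hmB, hm⟩ => Fin.eq_one_of_ne_zero _ fun hm0 => hm ?_⟩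
    simpa using ⟨hm0, hmB⟩
  · refine ⟨0, h.toFinset, fun m ⟨hmB, hm⟩ => by_contra fun hm0 => hm ?_⟩
    simpa using ⟨hmB, hm0⟩

theorem exists_homogeneous_of_not_splits {μ : Cardinal.{u}} (hμ : ℵ₀ < μ.ord.cof)
    (c : OT μ → OT aleph0.{v} → Fin 2) {B : Set (OT aleph0.{v})} (hB : B.Infinite)
    {D : Set (OT μ)} (hD : μ ≤ #D) (hDB : ∀ α ∈ D, ¬ Splits ℵ₀ {m | c α m = 0} B) :
    ∃ (A : Set (OT μ)) (B' : Set (OT aleph0.{v})) (i : Fin 2),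
      #A = μ ∧ #B' = ℵ₀ ∧ ∀ α ∈ A, ∀ β ∈ B', c α β = i := by
  choose! i E hiE using fun α hα => exists_eqOn_diff_finset_of_not_splits (hDB α hα)
  have hι : lift.{u} #(Fin 2 × Finset (OT aleph0.{v})) < lift.{v} μ.ord.cof :=
    (lift_le_aleph0.2 mk_le_aleph0).trans_lt (by rwa [aleph0_lt_lift])
  obtain ⟨⟨j, F⟩, hjF⟩ := exists_le_mk_of_subset_iUnion (hμ.le.trans (Ordinal.cof_ord_le μ)) hι
    hD (fun p => {α ∈ D | (i α, E α) = p}) (fun α hα => mem_iUnion.2 ⟨_, hα, rfl⟩)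
  refine ⟨_, B \ F, j, le_antisymm ((mk_set_le _).trans (mk_ord_toType μ).le) hjF,
    mk_set_eq_aleph0_iff.2 (hB.sdiff F.finite_toSet), ?_⟩
  rintro α ⟨hα, hαjF⟩ β hβ
  obtain ⟨rfl, rfl⟩ := Prod.mk.inj hαjF
  exact hiE α hα β hβ

theorem strongPolarized_of_lt_splittingNumber {μ : Cardinal.{u}} (hμ : ℵ₀ < μ.ord.cof)
    (hμs : lift.{w} μ < lift.{u} (splittingNumber.{w} ℵ₀)) : StrongPolarized μ aleph0.{v} := by
  intro c
  have hF : ¬ IsSplittingFamily ℵ₀ (range fun α => {m | c α m = 0}) := fun hF => by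
    have h1 := lift_le.{u}.2 (lift_splittingNumber_aleph0_le.{v, w} hF)
    have h2 := lift_le.{w}.2 (mk_range_le_lift (f := fun α => {m | c α m = 0}))
    have h3 := lift_lt.{_, v}.2 hμs
    simp only [lift_lift, mk_ord_toType] at h1 h2 h3
    exact (h3.trans_le h1).not_ge h2
  obtain ⟨B, hB, hBF⟩ := not_forall₂.1 hF
  exact exists_homogeneous_of_not_splits hμ c (mk_set_eq_aleph0_iff.1 hB) (D := Set.univ)
    (by simp) fun α _ hα => hBF ⟨_, mem_range_self α, hα⟩

theorem strongPolarized_of_reapingNumber_lt_cof {μ : Cardinal.{u}} (hμ : ℵ₀ < μ.ord.cof)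
    (hμr : lift.{u} (reapingNumber.{w} ℵ₀) < lift.{w} μ.ord.cof) :
    StrongPolarized μ aleph0.{v} := by
  intro c
  obtain ⟨F, hFr, hF⟩ := exists_isUnreaped_lift_mk_eq_lift_reapingNumber.{v, w}
  have hcover : Set.univ ⊆ ⋃ B : F, {α | ¬ Splits ℵ₀ {m | c α m = 0} B} := fun α _ => by
    obtain ⟨B, hB, hα⟩ := hF.exists_not_splits {m | c α m = 0}
    exact mem_iUnion.2 ⟨⟨B, hB⟩, hα⟩
  have hι : lift.{u} #F < lift.{v} μ.ord.cof := by
    have hFr' := congrArg lift.{u} hFr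
    simp only [lift_lift] at hFr'
    rw [← lift_lt.{_, w}]
    simpa [hFr'] using lift_lt.{_, v}.2 hμr
  obtain ⟨⟨B, hB⟩, hμB⟩ := exists_le_mk_of_subset_iUnion (hμ.le.trans (Ordinal.cof_ord_le μ)) hι
    (by simp) _ hcover
  exact exists_homogeneous_of_not_splits hμ c (mk_set_eq_aleph0_iff.1 (hF.1 B hB)) hμB
    fun α hα => hα

theorem two_power_aleph0_eq_aleph_two_of_eq (h : (2 : Cardinal.{v}) ^ aleph0.{v} = ℵ_ 2) :
    (2 : Cardinal.{u}) ^ aleph0.{u} = ℵ_ 2 := by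
  rw [← lift_eq_aleph_ofNat.{u, v}]
  simpa using congrArg lift.{u} h

theorem aleph_two_eq_succ_aleph_one : ℵ_ 2 = Order.succ ℵ₁ := by
  rw [succ_aleph, one_add_one_eq_two]

theorem isRegular_aleph_two : (ℵ_ 2).IsRegular :=
  aleph_two_eq_succ_aleph_one ▸ isRegular_succ aleph0_lt_aleph_one.le

theorem eq_aleph_one_or_eq_aleph_two {θ : Cardinal} (h1 : ℵ₁ ≤ θ) (h2 : θ ≤ ℵ_ 2) :
    θ = ℵ₁ ∨ θ = ℵ_ 2 := by
  rcases Order.le_succ_iff_eq_or_le.1 (h2.trans_eq aleph_two_eq_succ_aleph_one) with h | h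
  · exact Or.inr (h.trans aleph_two_eq_succ_aleph_one.symm)
  · exact Or.inl (le_antisymm h h1)

/-- if `𝔯 = ℵ₁` and `𝔰 = 2^ℵ₀ = ℵ₂`, then the strong polarized relation
holds simultaneously for every `θ ∈ [ℵ₁, 2^ℵ₀]`. -/
theorem stmt5
    (hr : reapingNumber ℵ₀ = aleph 1)
    (hs : splittingNumber ℵ₀ = 2 ^ ℵ₀) (hc : 2 ^ ℵ₀ = aleph 2) :
    ∀ θ : Cardinal, aleph 1 ≤ θ → θ ≤ 2 ^ ℵ₀ → StrongPolarized θ ℵ₀ := by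
  intro θ h1 h2
  rcases eq_aleph_one_or_eq_aleph_two h1 (h2.trans_eq (two_power_aleph0_eq_aleph_two_of_eq hc))
    with rfl | rfl
  · refine strongPolarized_of_lt_splittingNumber (by rw [isRegular_aleph_one.cof_ord]; simp) ?_
    rw [hs, two_power_aleph0_eq_aleph_two_of_eq hc]
    simp
  · refine strongPolarized_of_reapingNumber_lt_cof (by rw [isRegular_aleph_two.cof_ord]; simp) ?_
    rw [hr, isRegular_aleph_two.cof_ord]
    simp
end
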